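/- arXiv:1102.2471 — 2 statements merged into one kernel-verified Lean document; each statement's English description precedes it below -/
import Mathlib

section
/- Let Ξ ⊂ F^d be an A-Cartesian set. Then for every monomial order ≺, the Gröbner éscalier N_≺(I(Ξ)) of the vanishing ideal I(Ξ) equals {x^α : α ∈ A}; in particular it is independent of the monomial order. -/
/-! If `x^γ` with `γ ∈ A` were the leading monomial of some `f ∈ I(Ξ)`, take for each `i`
the functional `c i` on the nodes `y i 0, …, y i (γ i)` dual (by invertibility of the Vandermonde
matrix) to the power `t ^ (γ i)` among `1, t, …, t ^ (γ i)`. Their tensor product is a functional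
supported on the grid `{y(α) : α ≤ γ} ⊆ Ξ`, so it kills `f`; but it kills every monomial `x^β`
with some `β i < γ i`, in particular every non-leading monomial of `f`, and sends `x^γ` to `1`.
Conversely, for `m ∉ A` the Newton polynomial `∏ i, ∏ k < m i, (x i - y i k)` vanishes on `Ξ`
because `A` is lower, and since all its monomials divide `x^m`, its leading monomial is `x^m`
for every monomial order. -/

open MvPolynomial

/-- A monomial order on exponent vectors `Fin d →₀ ℕ`: a linear order in which `0` (i.e. the
monomial `1`) is least and which is compatible with addition of exponents (multiplication of
monomials). -/
structure MonOrder (d : ℕ) where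
  toLinearOrder : LinearOrder (Fin d →₀ ℕ)
  zero_le : ∀ a, toLinearOrder.le 0 a
  add_le_add : ∀ a b c, toLinearOrder.le a b → toLinearOrder.le (a + c) (b + c)

/-- `α` is the exponent of the leading monomial of `f` w.r.t. the monomial order `o`. -/
def MonOrder.IsLM {d : ℕ} {F : Type*} [CommSemiring F] (o : MonOrder d)
    (f : MvPolynomial (Fin d) F) (α : Fin d →₀ ℕ) : Prop :=
  α ∈ f.support ∧ ∀ β ∈ f.support, o.toLinearOrder.le β α
/-- The Gröbner éscalier of an ideal `I` w.r.t. a monomial order `o`: the monomials (exponent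
vectors) not divisible by the leading monomial of any nonzero element of `I`. -/
def escalier {d : ℕ} {F : Type*} [CommSemiring F] (o : MonOrder d)
    (I : Ideal (MvPolynomial (Fin d) F)) : Set (Fin d →₀ ℕ) :=
  {m | ∀ f ∈ I, f ≠ 0 → ∀ α, o.IsLM f α → ¬ α ≤ m}
/-- The vanishing ideal of a point set `Ξ ⊆ F^d`. -/
noncomputable def vanishIdeal {d : ℕ} {F : Type*} [Field F] (Ξ : Set (Fin d → F)) :
    Ideal (MvPolynomial (Fin d) F) :=
  ⨅ ξ ∈ Ξ, RingHom.ker (MvPolynomial.eval ξ)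
/-- `Ξ` is the `A`-Cartesian set determined by the lower set `A ⊆ ℕ^d` and the injective
functions `y i : ℕ → F`. -/
def IsCartesianWith {d : ℕ} {F : Type*} (A : Set (Fin d → ℕ)) (y : Fin d → ℕ → F)
    (Ξ : Set (Fin d → F)) : Prop :=
  IsLowerSet A ∧ (∀ i, Function.Injective (y i)) ∧
  Ξ = (fun α : Fin d → ℕ => fun i => y i (α i)) '' A

/-- `Ξ` is a Cartesian set. -/
def IsCartesian {d : ℕ} {F : Type*} (Ξ : Set (Fin d → F)) : Prop :=
  ∃ (A : Set (Fin d → ℕ)) (y : Fin d → ℕ → F), IsCartesianWith A y Ξ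

lemma exists_sum_mul_pow_eq_ite {F : Type*} [Field F] {y : ℕ → F} (hy : Function.Injective y)
    (g : ℕ) : ∃ c : Fin (g + 1) → F, ∀ b ≤ g,
      ∑ a : Fin (g + 1), c a * y a ^ b = if b = g then 1 else 0 := by
  set V := Matrix.vandermonde fun a : Fin (g + 1) => y a
  have hV : IsUnit V := by
    rw [Matrix.isUnit_iff_isUnit_det, isUnit_iff_ne_zero]
    exact Matrix.det_vandermonde_ne_zero_iff.mpr (hy.comp Fin.val_injective)
  obtain ⟨c, hc⟩ := Matrix.vecMul_surjective_iff_isUnit.mpr hV (Pi.single (Fin.last g) 1)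
  refine ⟨c, fun b hb => ?_⟩
  have := congrFun hc ⟨b, Nat.lt_succ_of_le hb⟩
  simp only [Matrix.vecMul, dotProduct, V, Matrix.vandermonde_apply] at this
  simp [this, Pi.single_apply, Fin.ext_iff]

lemma MvPolynomial.sum_pi_prod_mul_eval {σ R : Type*} [Fintype σ] [DecidableEq σ] [CommSemiring R]
    {κ : σ → Type*} [∀ i, Fintype (κ i)] (c z : ∀ i, κ i → R) (f : MvPolynomial σ R) :
    ∑ α : (∀ i, κ i), (∏ i, c i (α i)) * eval (fun i => z i (α i)) f =
      ∑ β ∈ f.support, coeff β f * ∏ i, ∑ a, c i a * z i a ^ β i := by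
  simp only [Fintype.prod_sum, Finset.prod_mul_distrib, Finset.mul_sum, eval_eq']
  rw [Finset.sum_comm]
  exact Finset.sum_congr rfl fun _ _ => Finset.sum_congr rfl fun _ _ => by ring

/-- Every monomial of `p` divides `x^t`, and `x^t` has coefficient `1`; then `x^t` is the leading
monomial of `p` for every monomial order. -/
def MvPolynomial.HasTopMonomial {σ R : Type*} [CommSemiring R] (p : MvPolynomial σ R)
    (t : σ →₀ ℕ) : Prop :=
  (∀ β ∈ p.support, β ≤ t) ∧ coeff t p = 1

namespace MvPolynomial.HasTopMonomial

variable {σ R : Type*} [CommSemiring R]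

lemma mul {p q : MvPolynomial σ R} {s t : σ →₀ ℕ} (hp : p.HasTopMonomial s)
    (hq : q.HasTopMonomial t) : (p * q).HasTopMonomial (s + t) := by
  classical
  refine ⟨fun β hβ => ?_, ?_⟩
  · obtain ⟨a, ha, b, hb, rfl⟩ := Finset.mem_add.mp (support_mul p q hβ)
    exact add_le_add (hp.1 a ha) (hq.1 b hb)
  · rw [coeff_mul, Finset.sum_eq_single (s, t), hp.2, hq.2, one_mul]
    · rintro ⟨a, b⟩ hab hne
      simp only [Finset.HasAntidiagonal.mem_antidiagonal] at hab
      by_contra h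
      have ha := hp.1 a (mem_support_iff.mpr (left_ne_zero_of_mul h))
      have hb := hq.1 b (mem_support_iff.mpr (right_ne_zero_of_mul h))
      have hsa : s ≤ a := le_of_add_le_add_right (a := t) (by rw [← hab]; gcongr)
      have htb : t ≤ b := le_of_add_le_add_left (a := s) (by rw [← hab]; gcongr)
      exact hne (Prod.ext (le_antisymm ha hsa) (le_antisymm hb htb))
    · simp

lemma prod {ι : Type*} (s : Finset ι) {p : ι → MvPolynomial σ R} {t : ι → σ →₀ ℕ}
    (h : ∀ j ∈ s, (p j).HasTopMonomial (t j)) :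
    (∏ j ∈ s, p j).HasTopMonomial (∑ j ∈ s, t j) := by
  classical
  induction s using Finset.induction_on with
  | empty => exact ⟨fun β hβ => by simp_all [coeff_one], by simp⟩
  | insert j s hj ih =>
    rw [Finset.prod_insert hj, Finset.sum_insert hj]
    exact (h j (Finset.mem_insert_self j s)).mul (ih fun k hk => h k (Finset.mem_insert_of_mem hk))

lemma ne_zero [Nontrivial R] {p : MvPolynomial σ R} {t : σ →₀ ℕ} (h : p.HasTopMonomial t) :
    p ≠ 0 := by
  rintro rfl
  simpa using h.2

end MvPolynomial.HasTopMonomial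

lemma MvPolynomial.hasTopMonomial_X_sub_C {σ R : Type*} [CommRing R] (i : σ) (a : R) :
    (X i - C a : MvPolynomial σ R).HasTopMonomial (Finsupp.single i 1) := by
  classical
  refine ⟨fun β hβ => ?_, ?_⟩
  · rw [mem_support_iff, coeff_sub, coeff_X, coeff_C] at hβ
    by_cases h : Finsupp.single i 1 = β
    · exact h.ge
    · have : 0 = β := by by_contra h'; simp [h, h'] at hβ
      exact this ▸ zero_le
  · rw [coeff_sub, coeff_X, if_pos rfl, coeff_C,
      if_neg (Finsupp.single_ne_zero.mpr one_ne_zero).symm, sub_zero]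

noncomputable def newtonMonomial {σ R : Type*} [Fintype σ] [CommRing R] (y : σ → ℕ → R)
    (m : σ →₀ ℕ) : MvPolynomial σ R :=
  ∏ i, ∏ k ∈ Finset.range (m i), (X i - C (y i k))

section newtonMonomial

variable {σ R : Type*} [Fintype σ] [CommRing R]

lemma hasTopMonomial_newtonMonomial (y : σ → ℕ → R) (m : σ →₀ ℕ) :
    (newtonMonomial y m).HasTopMonomial m := by
  have hm : ∑ i, ∑ _k ∈ Finset.range (m i), Finsupp.single i 1 = m := by
    simp only [Finset.sum_const, Finset.card_range, Finsupp.smul_single, smul_eq_mul, mul_one]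
    exact Finsupp.univ_sum_single m
  have h := HasTopMonomial.prod Finset.univ fun i _ =>
    HasTopMonomial.prod (Finset.range (m i)) fun k _ => hasTopMonomial_X_sub_C i (y i k)
  rwa [hm] at h

lemma eval_newtonMonomial_eq_zero (y : σ → ℕ → R) {m : σ →₀ ℕ} {α : σ → ℕ}
    (h : ∃ i, α i < m i) : eval (fun i => y i (α i)) (newtonMonomial y m) = 0 := by
  obtain ⟨i, hi⟩ := h
  simp only [newtonMonomial, map_prod, map_sub, eval_X, eval_C]
  exact Finset.prod_eq_zero (Finset.mem_univ i)
    (Finset.prod_eq_zero (Finset.mem_range.mpr hi) (sub_self _))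

end newtonMonomial

namespace MonOrder

variable {d : ℕ} (o : MonOrder d)

lemma le_of_le {a b : Fin d →₀ ℕ} (h : a ≤ b) :
    o.toLinearOrder.le a b := by
  obtain ⟨c, rfl⟩ := le_iff_exists_add.mp h
  simpa [add_comm] using o.add_le_add 0 c a (o.zero_le c)

lemma exists_lt_of_le_of_ne {β γ : Fin d →₀ ℕ}
    (hle : o.toLinearOrder.le β γ) (hne : β ≠ γ) : ∃ i, β i < γ i := by
  by_contra! h
  exact hne (o.toLinearOrder.le_antisymm β γ hle (o.le_of_le (Finsupp.le_def.mpr h)))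

lemma isLM_of_hasTopMonomial {R : Type*} [CommSemiring R] [Nontrivial R]
    {p : MvPolynomial (Fin d) R} {t : Fin d →₀ ℕ} (h : p.HasTopMonomial t) : o.IsLM p t :=
  ⟨mem_support_iff.mpr (h.2 ▸ one_ne_zero), fun β hβ => o.le_of_le (h.1 β hβ)⟩

lemma not_isLM_of_eval_eq_zero {F : Type*} [Field F]
    {y : Fin d → ℕ → F} (hy : ∀ i, Function.Injective (y i)) {f : MvPolynomial (Fin d) F}
    {γ : Fin d →₀ ℕ} (hf : ∀ α : Fin d → ℕ, α ≤ ⇑γ → eval (fun i => y i (α i)) f = 0) :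
    ¬ o.IsLM f γ := by
  intro hlm
  choose c hc using fun i => exists_sum_mul_pow_eq_ite (hy i) (γ i)
  have hgrid : ∑ α : (∀ i, Fin (γ i + 1)), (∏ i, c i (α i)) * eval (fun i => y i (α i)) f = 0 :=
    Finset.sum_eq_zero fun α _ => by
      rw [hf (fun i => α i) fun i => Nat.lt_succ_iff.mp (α i).isLt, mul_zero]
  have hcoeff : ∑ β ∈ f.support, coeff β f * ∏ i, ∑ a, c i a * y i a ^ β i = coeff γ f := by
    rw [Finset.sum_eq_single γ]
    · simp [hc _ _ le_rfl]
    · intro β hβ hne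
      obtain ⟨i, hi⟩ := o.exists_lt_of_le_of_ne (hlm.2 β hβ) hne
      rw [Finset.prod_eq_zero (Finset.mem_univ i) (by rw [hc i _ hi.le, if_neg hi.ne]), mul_zero]
    · exact fun h => absurd hlm.1 h
  rw [sum_pi_prod_mul_eval (fun i a => c i a) (fun i a => y i a), hcoeff] at hgrid
  exact mem_support_iff.mp hlm.1 hgrid

end MonOrder

lemma mem_vanishIdeal {d : ℕ} {F : Type*} [Field F] {Ξ : Set (Fin d → F)}
    {f : MvPolynomial (Fin d) F} : f ∈ vanishIdeal Ξ ↔ ∀ ξ ∈ Ξ, eval ξ f = 0 := by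
  simp [vanishIdeal, RingHom.mem_ker]

theorem stmt11_general {F : Type*} [Field F] {d : ℕ}
    (A : Set (Fin d → ℕ)) (y : Fin d → ℕ → F) (Ξ : Set (Fin d → F))
    (hcart : IsCartesianWith A y Ξ) :
    ∀ o : MonOrder d,
      escalier o (vanishIdeal Ξ) = (fun α : Fin d → ℕ => Finsupp.equivFunOnFinite.symm α) '' A := by
  obtain ⟨hA, hy, hΞ⟩ := hcart
  intro o
  ext m
  constructor
  · intro hm
    refine ⟨m, ?_, Finsupp.equivFunOnFinite_symm_coe m⟩
    by_contra hmA
    have hvanish : newtonMonomial y m ∈ vanishIdeal Ξ := by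
      refine mem_vanishIdeal.mpr ?_
      rw [hΞ]
      rintro _ ⟨α, hα, rfl⟩
      refine eval_newtonMonomial_eq_zero y ?_
      by_contra! hle
      exact hmA (hA hle hα)
    have htop := hasTopMonomial_newtonMonomial y m
    exact hm _ hvanish htop.ne_zero m (o.isLM_of_hasTopMonomial htop) le_rfl
  · rintro ⟨α, hα, rfl⟩ f hf - β hlm hβ
    refine o.not_isLM_of_eval_eq_zero hy (fun α' hα' => ?_) hlm
    exact mem_vanishIdeal.mp hf _ (hΞ ▸ ⟨α', hA (fun i => (hα' i).trans (hβ i)) hα, rfl⟩)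

/-- Theorem 2.1, Sauer. If `Ξ ⊆ F^d` is an `A`-Cartesian set, then for every
monomial order `≺`, the Gröbner éscalier `N_≺(I(Ξ))` of the vanishing ideal of `Ξ` equals
`{x^α : α ∈ A}`; in particular it is independent of the monomial order. -/
theorem stmt11 {F : Type*} [Field F] [CharZero F] {d : ℕ}
    (A : Set (Fin d → ℕ)) (y : Fin d → ℕ → F) (Ξ : Set (Fin d → F))
    (hfin : Ξ.Finite) (hcart : IsCartesianWith A y Ξ) :
    ∀ o : MonOrder d,
      escalier o (vanishIdeal Ξ) = (fun α : Fin d → ℕ => Finsupp.equivFunOnFinite.symm α) '' A :=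
  stmt11_general A y Ξ hcart
end

section
/- Let Ξ = {(0,0), (11/10, −1/10), (1/10, 9/10), (1,1)} ⊂ ℚ^2. Then the order ideal O = {1, x_1, x_2, x_1x_2} is a monomial order quotient basis for the vanishing ideal I(Ξ) ⊂ ℚ[x_1,x_2], but for every monomial order ≺ the Gröbner éscalier N_≺(I(Ξ)) is not equal to O; in particular, both {1, x_1, x_2, x_1^2} and {1, x_1, x_2, x_2^2} are linearly independent modulo I(Ξ). -/
/-!
Evaluation at the four points embeds `ℚ[x₁,x₂]/I(Ξ)` into `ℚ⁴`, so four monomials are linearly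
independent modulo `I(Ξ)`, and then a basis of the quotient, as soon as their evaluation matrix
at `Ξ` is nonsingular; three `4 × 4` determinants give the positive claims.

For the éscalier, `I(Ξ)` contains `98x₁² − 2x₁x₂ − 107x₁ + 11x₂` and `98x₂² − 2x₁x₂ − 9x₁ − 87x₂`.
If `N_≺(I(Ξ)) = O`, their leading monomials lie outside `O`, so they are `x₁²` and `x₂²`, and
`x₁x₂ ≼ x₁²`, `x₁x₂ ≼ x₂²`. Then `(x₁x₂)² ≼ x₁² · x₁x₂ ≼ x₁² x₂² = (x₁x₂)²`, which forces
`x₁² = x₁x₂`.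
-/

open MvPolynomial

/-- `O` (a set of exponent vectors) is a monomial order quotient basis for `I`: it is a finite
order ideal (lower set of exponents) whose monomials give an `F`-vector space basis of
`F[x]/I`. -/
def IsMOQB {d : ℕ} {F : Type*} [Field F] (I : Ideal (MvPolynomial (Fin d) F))
    (O : Set (Fin d →₀ ℕ)) : Prop :=
  O.Finite ∧ IsLowerSet O ∧
  LinearIndependent F (fun t : O => Ideal.Quotient.mk I (monomial (t : Fin d →₀ ℕ) (1 : F))) ∧
  Submodule.span F
    (Set.range fun t : O => Ideal.Quotient.mk I (monomial (t : Fin d →₀ ℕ) (1 : F))) = ⊤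
/-- The four points `(0,0), (11/10, −1/10), (1/10, 9/10), (1,1)` in `ℚ²`. -/
noncomputable def Xi16 : Set (Fin 2 → ℚ) :=
  {![0, 0], ![11/10, -1/10], ![1/10, 9/10], ![1, 1]}

/-- The order ideal `O = {1, x₁, x₂, x₁x₂}`, given by its exponent vectors. -/
noncomputable def O16 : Set (Fin 2 →₀ ℕ) :=
  {0, Finsupp.single 0 1, Finsupp.single 1 1, Finsupp.single 0 1 + Finsupp.single 1 1}

open Finsupp (single)

theorem Matrix.range_vecCons_four {α : Type*} (a b c d : α) :
    Set.range ![a, b, c, d] = {a, b, c, d} := by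
  simp only [Matrix.range_cons, Matrix.range_empty, Set.union_empty, Set.singleton_union]

section VanishingIdeal

variable {ι F : Type*} [Field F] {d : ℕ} (p : ι → Fin d → F)

theorem mem_vanishIdeal_range_iff {f : MvPolynomial (Fin d) F} :
    f ∈ vanishIdeal (Set.range p) ↔ ∀ i, eval (p i) f = 0 := by
  simp [vanishIdeal]

noncomputable def evalQuotient :
    MvPolynomial (Fin d) F ⧸ vanishIdeal (Set.range p) →ₐ[F] (ι → F) :=
  Ideal.Quotient.liftₐ _ (AlgHom.pi fun i => aeval (p i))
    fun _ hf => funext ((mem_vanishIdeal_range_iff p).1 hf)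

theorem evalQuotient_mk (f : MvPolynomial (Fin d) F) :
    evalQuotient p (Ideal.Quotient.mk _ f) = fun i => eval (p i) f :=
  rfl

theorem evalQuotient_injective : Function.Injective (evalQuotient p) := by
  rw [injective_iff_map_eq_zero]
  intro a ha
  obtain ⟨f, rfl⟩ := Ideal.Quotient.mk_surjective a
  rw [Ideal.Quotient.eq_zero_iff_mem, mem_vanishIdeal_range_iff]
  exact congrFun ha

theorem linearIndependent_mk_of_linearIndependent_eval {κ : Type*}
    {v : κ → MvPolynomial (Fin d) F} (h : LinearIndependent F fun j i => eval (p i) (v j)) :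
    LinearIndependent F (Ideal.Quotient.mk (vanishIdeal (Set.range p)) ∘ v) :=
  LinearIndependent.of_comp (evalQuotient p).toLinearMap h

theorem span_range_mk_eq_top_of_span_eval {κ : Type*} {v : κ → MvPolynomial (Fin d) F}
    (h : Submodule.span F (Set.range fun j i => eval (p i) (v j)) = ⊤) :
    Submodule.span F (Set.range (Ideal.Quotient.mk (vanishIdeal (Set.range p)) ∘ v)) = ⊤ := by
  let e := (evalQuotient p).toLinearMap
  have hmap : (Submodule.span F (Set.range (Ideal.Quotient.mk _ ∘ v))).map e = ⊤ := by
    rw [Submodule.map_span, ← Set.range_comp]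
    exact h
  apply Submodule.map_injective_of_injective (f := e) (evalQuotient_injective p)
  rw [hmap, eq_comm, ← top_le_iff, ← hmap]
  exact Submodule.map_mono le_top

noncomputable def evalMatrix (u : ι → Fin d →₀ ℕ) : Matrix ι ι F :=
  Matrix.of fun i j => eval (p i) (monomial (u j) 1)

variable [Fintype ι] [DecidableEq ι] {u : ι → Fin d →₀ ℕ}

theorem linearIndependent_mk_monomial_of_det_ne_zero (hu : (evalMatrix p u).det ≠ 0) :
    LinearIndependent F
      fun j => Ideal.Quotient.mk (vanishIdeal (Set.range p)) (monomial (u j) (1 : F)) :=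
  linearIndependent_mk_of_linearIndependent_eval p (Matrix.linearIndependent_cols_of_det_ne_zero hu)

theorem linearIndepOn_mk_monomial_range_of_det_ne_zero (hu : (evalMatrix p u).det ≠ 0) :
    LinearIndepOn F (fun t => Ideal.Quotient.mk (vanishIdeal (Set.range p)) (monomial t (1 : F)))
      (Set.range u) := by
  let g := fun t => Ideal.Quotient.mk (vanishIdeal (Set.range p)) (monomial t (1 : F))
  have h : LinearIndependent F (g ∘ u) := linearIndependent_mk_monomial_of_det_ne_zero p hu
  exact (linearIndepOn_range_iff (Function.Injective.of_comp h.injective) g).2 h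

theorem isMOQB_range_of_det_ne_zero (hlower : IsLowerSet (Set.range u))
    (hu : (evalMatrix p u).det ≠ 0) : IsMOQB (vanishIdeal (Set.range p)) (Set.range u) := by
  refine ⟨Set.finite_range u, hlower, linearIndepOn_mk_monomial_range_of_det_ne_zero p hu, ?_⟩
  let g := fun t => Ideal.Quotient.mk (vanishIdeal (Set.range p)) (monomial t (1 : F))
  have hrange : (Set.range fun t : Set.range u => g t) = Set.range (g ∘ u) := by
    rw [Set.range_comp, Set.image_eq_range]
  refine hrange ▸ span_range_mk_eq_top_of_span_eval p ?_
  exact (Matrix.linearIndependent_cols_of_det_ne_zero hu).span_eq_top_of_card_eq_finrank'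
    (Module.finrank_fintype_fun_eq_card F).symm

end VanishingIdeal

namespace MonOrder

variable {d : ℕ} (o : MonOrder d)

theorem exists_isLM {F : Type*} [CommSemiring F] {f : MvPolynomial (Fin d) F} (hf : f ≠ 0) :
    ∃ α, o.IsLM f α := by
  let := o.toLinearOrder
  obtain ⟨α, hα, hmax⟩ := f.support.exists_max_image id (support_nonempty.2 hf)
  exact ⟨α, hα, hmax⟩

theorem le_of_forall_mem_escalier {F : Type*} [CommSemiring F]
    {I : Ideal (MvPolynomial (Fin d) F)} {f : MvPolynomial (Fin d) F} (hfI : f ∈ I)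
    {β γ : Fin d →₀ ℕ} (hγ : γ ∈ f.support) (hβ : ∀ α ∈ f.support, α ≠ β → α ∈ escalier o I) :
    o.toLinearOrder.le γ β := by
  have hf : f ≠ 0 := ne_zero_iff.2 ⟨γ, mem_support_iff.1 hγ⟩
  obtain ⟨α, hαsupp, hαmax⟩ := o.exists_isLM hf
  obtain rfl : α = β := by
    by_contra hne
    exact hβ α hαsupp hne f hfI hf α ⟨hαsupp, hαmax⟩ le_rfl
  exact hαmax γ hγ

theorem eq_of_le_of_le_of_add_eq {a b c : Fin d →₀ ℕ} (hab : o.toLinearOrder.le a b)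
    (hac : o.toLinearOrder.le a c) (h : b + c = a + a) : b = a := by
  have hba : o.toLinearOrder.le (b + a) (a + a) := by
    have := o.add_le_add a c b hac
    rwa [add_comm a b, add_comm c b, h] at this
  exact add_right_cancel (o.toLinearOrder.le_antisymm _ _ hba (o.add_le_add a b a hab))

end MonOrder

noncomputable def pts16 : Fin 4 → Fin 2 → ℚ :=
  ![![0, 0], ![11/10, -1/10], ![1/10, 9/10], ![1, 1]]

theorem range_pts16 : Set.range pts16 = Xi16 :=
  Matrix.range_vecCons_four _ _ _ _

theorem O16_eq_Iic : O16 = Set.Iic (single 0 1 + single 1 1) := by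
  ext t
  simp only [Set.mem_Iic, O16, Set.mem_insert_iff, Set.mem_singleton_iff, Finsupp.le_def,
    Fin.forall_fin_two, Finsupp.ext_iff, Finsupp.coe_zero, Finsupp.coe_add, Pi.zero_apply,
    Pi.add_apply, Finsupp.single_eq_same, ne_eq, one_ne_zero, zero_ne_one, not_false_eq_true,
    Finsupp.single_eq_of_ne, add_zero, zero_add]
  omega

theorem det_evalMatrix_O16_ne_zero :
    (evalMatrix pts16 ![0, single 0 1, single 1 1, single 0 1 + single 1 1]).det ≠ 0 := by
  simp [evalMatrix, pts16, Matrix.det_succ_row_zero, Fin.sum_univ_succ, eval_monomial]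
  norm_num

theorem det_evalMatrix_x1sq_ne_zero :
    (evalMatrix pts16 ![0, single 0 1, single 1 1, single 0 2]).det ≠ 0 := by
  simp [evalMatrix, pts16, Matrix.det_succ_row_zero, Fin.sum_univ_succ, eval_monomial]
  norm_num

theorem det_evalMatrix_x2sq_ne_zero :
    (evalMatrix pts16 ![0, single 0 1, single 1 1, single 1 2]).det ≠ 0 := by
  simp [evalMatrix, pts16, Matrix.det_succ_row_zero, Fin.sum_univ_succ, eval_monomial]
  norm_num

-- The reductions of `x₁²` and `x₂²` modulo `I(Ξ)` onto the span of `O`, up to the factor 98.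
noncomputable def relX1sq : MvPolynomial (Fin 2) ℚ :=
  monomial (single 0 2) 98 - monomial (single 0 1 + single 1 1) 2 - monomial (single 0 1) 107 +
    monomial (single 1 1) 11

theorem relX1sq_mem_vanishIdeal : relX1sq ∈ vanishIdeal Xi16 := by
  rw [← range_pts16, mem_vanishIdeal_range_iff]
  intro i
  fin_cases i <;> simp [relX1sq, pts16, eval_monomial] <;> norm_num

theorem x1x2_mem_support_relX1sq : single 0 1 + single 1 1 ∈ relX1sq.support := by
  simp [relX1sq, mem_support_iff, coeff_monomial, Finsupp.ext_iff, Fin.forall_fin_two]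

theorem mem_O16_of_mem_support_relX1sq {α : Fin 2 →₀ ℕ} (hα : α ∈ relX1sq.support)
    (hne : α ≠ single 0 2) : α ∈ O16 := by
  simp only [relX1sq, mem_support_iff, coeff_add, coeff_sub, coeff_monomial] at hα
  simp only [O16, Set.mem_insert_iff, Set.mem_singleton_iff]
  split_ifs at hα <;> simp_all

noncomputable def relX2sq : MvPolynomial (Fin 2) ℚ :=
  monomial (single 1 2) 98 - monomial (single 0 1 + single 1 1) 2 - monomial (single 0 1) 9 -
    monomial (single 1 1) 87

theorem relX2sq_mem_vanishIdeal : relX2sq ∈ vanishIdeal Xi16 := by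
  rw [← range_pts16, mem_vanishIdeal_range_iff]
  intro i
  fin_cases i <;> simp [relX2sq, pts16, eval_monomial] <;> norm_num

theorem x1x2_mem_support_relX2sq : single 0 1 + single 1 1 ∈ relX2sq.support := by
  simp [relX2sq, mem_support_iff, coeff_monomial, Finsupp.ext_iff, Fin.forall_fin_two]

theorem mem_O16_of_mem_support_relX2sq {α : Fin 2 →₀ ℕ} (hα : α ∈ relX2sq.support)
    (hne : α ≠ single 1 2) : α ∈ O16 := by
  simp only [relX2sq, mem_support_iff, coeff_sub, coeff_monomial] at hα
  simp only [O16, Set.mem_insert_iff, Set.mem_singleton_iff]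
  split_ifs at hα <;> simp_all

theorem escalier_ne_O16 (o : MonOrder 2) : escalier o (vanishIdeal Xi16) ≠ O16 := by
  intro h
  have h₁ := o.le_of_forall_mem_escalier relX1sq_mem_vanishIdeal x1x2_mem_support_relX1sq
    fun α hα hne => h ▸ mem_O16_of_mem_support_relX1sq hα hne
  have h₂ := o.le_of_forall_mem_escalier relX2sq_mem_vanishIdeal x1x2_mem_support_relX2sq
    fun α hα hne => h ▸ mem_O16_of_mem_support_relX2sq hα hne
  have heq := o.eq_of_le_of_le_of_add_eq h₁ h₂ (by ext i; fin_cases i <;> simp)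
  simp [Finsupp.ext_iff, Fin.forall_fin_two] at heq

/-- For `Ξ = {(0,0), (11/10, −1/10), (1/10, 9/10), (1,1)} ⊆ ℚ²`, the order
ideal `O = {1, x₁, x₂, x₁x₂}` is a monomial order quotient basis for `I(Ξ)`, but for every
monomial order `≺` the Gröbner éscalier `N_≺(I(Ξ))` differs from `O`; in particular both
`{1, x₁, x₂, x₁²}` and `{1, x₁, x₂, x₂²}` are linearly independent modulo `I(Ξ)`. -/
theorem stmt16 :
    IsMOQB (vanishIdeal Xi16) O16 ∧
    (∀ o : MonOrder 2, escalier o (vanishIdeal Xi16) ≠ O16) ∧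
    LinearIndependent ℚ
      (fun t : ({0, Finsupp.single 0 1, Finsupp.single 1 1, Finsupp.single 0 2} :
          Set (Fin 2 →₀ ℕ)) =>
        Ideal.Quotient.mk (vanishIdeal Xi16) (monomial (t : Fin 2 →₀ ℕ) (1 : ℚ))) ∧
    LinearIndependent ℚ
      (fun t : ({0, Finsupp.single 0 1, Finsupp.single 1 1, Finsupp.single 1 2} :
          Set (Fin 2 →₀ ℕ)) =>
        Ideal.Quotient.mk (vanishIdeal Xi16) (monomial (t : Fin 2 →₀ ℕ) (1 : ℚ))) := by
  refine ⟨?_, escalier_ne_O16, ?_, ?_⟩ <;> rw [← range_pts16]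
  · have hO : O16 = Set.range ![0, single 0 1, single 1 1, single 0 1 + single 1 1] :=
      (Matrix.range_vecCons_four _ _ _ _).symm
    have hlower : IsLowerSet O16 := O16_eq_Iic ▸ isLowerSet_Iic _
    rw [hO] at hlower ⊢
    exact isMOQB_range_of_det_ne_zero pts16 hlower det_evalMatrix_O16_ne_zero
  · rw [← Matrix.range_vecCons_four]
    exact linearIndepOn_mk_monomial_range_of_det_ne_zero pts16 det_evalMatrix_x1sq_ne_zero
  · rw [← Matrix.range_vecCons_four]
    exact linearIndepOn_mk_monomial_range_of_det_ne_zero pts16 det_evalMatrix_x2sq_ne_zero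
end
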